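/- arXiv:1608.02724 — 3 statements merged into one kernel-verified Lean document; each statement's English description precedes it below -/
import Mathlib

section
/- There is no isometric (distance-ratio preserving) map from any open subset of the unit sphere S² into the Euclidean plane; that is, if U ⊆ S² is a nonempty open set and f : U → ℝ² satisfies dist(f x, f y) = c · dist(x, y) for some constant c > 0 and all x, y ∈ U (distance measured intrinsically on the sphere, or extrinsically in ℝ³), then a contradiction follows. -/
/-!
Take a point `p` of `U` and three points of `U` on a small circle around it, forming an
equilateral triangle of side `D` whose vertices are at distance `R` from `p`. Their images under
`f` again form an equilateral triangle with a point equidistant from its vertices; in the plane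
that point can only be the circumcentre, which forces `D ^ 2 = 3 * R ^ 2`. On the sphere, for the
circle at height `s` on the axis through `p`, one has `R ^ 2 = 2 - 2 * s` and
`D ^ 2 = 3 * (1 - s ^ 2)`, which differ by `3 * (1 - s) ^ 2 ≠ 0`: the centre of a spherical
circle does not lie in the plane of the circle.
-/

open Module Metric RealInnerProductSpace

def IsCenteredEquilateral {X : Type*} [PseudoMetricSpace X] (q : X) (y : Fin 3 → X) (R D : ℝ) :
    Prop :=
  (∀ k, dist (y k) q = R) ∧ ∀ j k, j ≠ k → dist (y j) (y k) = D

theorem IsCenteredEquilateral.map_of_dist_eq_mul {X Y : Type*} [PseudoMetricSpace X]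
    [PseudoMetricSpace Y] {f : X → Y} {c : ℝ} (hf : ∀ x y, dist (f x) (f y) = c * dist x y)
    {q : X} {y : Fin 3 → X} {R D : ℝ} (h : IsCenteredEquilateral q y R D) :
    IsCenteredEquilateral (f q) (f ∘ y) (c * R) (c * D) :=
  ⟨fun k => by simp [hf, h.1 k], fun j k hjk => by simp [hf, h.2 j k hjk]⟩

section InnerProductSpace

variable {E : Type*} [NormedAddCommGroup E] [InnerProductSpace ℝ E]

/- The Gram matrix `(a - b) • 1 + b • J` has determinant `(a - b) ^ 2 * (a + 2 * b)`, and it is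
singular because three vectors in dimension at most two are linearly dependent. -/
theorem eq_or_add_two_mul_eq_zero_of_inner_eq_ite [FiniteDimensional ℝ E]
    (hE : finrank ℝ E ≤ 2) {u : Fin 3 → E} {a b : ℝ}
    (hu : ∀ j k, ⟪u j, u k⟫ = if j = k then a else b) : a = b ∨ a + 2 * b = 0 := by
  have hdep : ¬ LinearIndependent ℝ u := fun h => by
    simpa using h.fintype_card_le_finrank.trans hE
  obtain ⟨g, hg, i, hgi⟩ := Fintype.not_linearIndependent_iff.mp hdep
  have hrow : ∀ j, (a - b) * g j + b * ∑ k, g k = 0 := fun j => by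
    have := congrArg (inner ℝ (u j)) hg
    simp only [inner_sum, real_inner_smul_right, hu, inner_zero_right] at this
    fin_cases j <;> simp [Fin.sum_univ_three] at this ⊢ <;> linarith
  have hsum : (a + 2 * b) * ∑ k, g k = 0 := by
    simp only [Fin.sum_univ_three] at hrow ⊢
    linear_combination hrow 0 + hrow 1 + hrow 2
  rcases mul_eq_zero.mp hsum with h | h
  · exact Or.inr h
  · left
    have := hrow i
    rw [h, mul_zero, add_zero] at this
    exact sub_eq_zero.mp ((mul_eq_zero.mp this).resolve_right hgi)

theorem IsCenteredEquilateral.sq_eq_three_mul_sq [FiniteDimensional ℝ E] (hE : finrank ℝ E ≤ 2)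
    {q : E} {y : Fin 3 → E} {R D : ℝ} (h : IsCenteredEquilateral q y R D) (hD : D ≠ 0) :
    D ^ 2 = 3 * R ^ 2 := by
  have hgram : ∀ j k, ⟪y j - q, y k - q⟫ = if j = k then R ^ 2 else R ^ 2 - D ^ 2 / 2 := by
    intro j k
    split_ifs with hjk
    · rw [hjk, real_inner_self_eq_norm_sq, ← dist_eq_norm, h.1]
    · have := norm_sub_sq_real (y j - q) (y k - q)
      rw [sub_sub_sub_cancel_right, ← dist_eq_norm, ← dist_eq_norm, ← dist_eq_norm, h.1, h.1,
        h.2 j k hjk] at this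
      linarith
  rcases eq_or_add_two_mul_eq_zero_of_inner_eq_ite hE hgram with h' | h'
  · exact absurd (by linarith : D ^ 2 = 0) (pow_ne_zero 2 hD)
  · linarith

theorem exists_unit_vectors_inner_eq_neg_half (hE : 2 ≤ finrank ℝ E) :
    ∃ v : Fin 3 → E, (∀ k, ‖v k‖ = 1) ∧ ∀ j k, j ≠ k → ⟪v j, v k⟫ = -1 / 2 := by
  have := Module.finite_of_finrank_pos (by omega : 0 < finrank ℝ E)
  obtain ⟨e, he⟩ : ∃ e : Fin 2 → E, Orthonormal ℝ e :=
    ⟨_, (stdOrthonormalBasis ℝ E).orthonormal.comp _ (Fin.castLE_injective hE)⟩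
  have he' := orthonormal_iff_ite.mp he
  -- the vertices of an equilateral triangle inscribed in the unit circle spanned by `e`
  set v : Fin 3 → E :=
    ![e 0, (-1 / 2 : ℝ) • e 0 + (√3 / 2) • e 1, (-1 / 2 : ℝ) • e 0 - (√3 / 2) • e 1]
  have h3 : √3 ^ 2 = 3 := Real.sq_sqrt (by norm_num)
  have hv : ∀ j k, ⟪v j, v k⟫ = if j = k then 1 else -1 / 2 := by
    intro j k
    fin_cases j <;> fin_cases k <;>
      simp [v, inner_add_left, inner_add_right, inner_sub_left, inner_sub_right,
        real_inner_smul_left, real_inner_smul_right, he', -inner_self_eq_norm_sq_to_K] <;>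
      linarith
  refine ⟨v, fun k => ?_, fun j k hjk => by rw [hv, if_neg hjk]⟩
  rw [← pow_eq_one_iff_of_nonneg (norm_nonneg _) two_ne_zero, ← real_inner_self_eq_norm_sq,
    hv, if_pos rfl]

theorem norm_smul_add_smul_sq_of_inner_eq_zero {p w : E} (hp : ‖p‖ = 1) (hw : ‖w‖ = 1)
    (hpw : ⟪p, w⟫ = 0) (x y : ℝ) : ‖x • p + y • w‖ ^ 2 = x ^ 2 + y ^ 2 := by
  rw [norm_add_sq_real, real_inner_smul_left, real_inner_smul_right, hpw, norm_smul, norm_smul,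
    hp, hw, Real.norm_eq_abs, Real.norm_eq_abs]
  simp [sq_abs]

variable {p : E} {v : Fin 3 → E}

theorem norm_smul_add_smul_eq_one (hp : ‖p‖ = 1) (hv : ∀ k, ‖v k‖ = 1) (hpv : ∀ k, ⟪p, v k⟫ = 0)
    {s t : ℝ} (hst : s ^ 2 + t ^ 2 = 1) (k : Fin 3) : ‖s • p + t • v k‖ = 1 := by
  rw [← pow_eq_one_iff_of_nonneg (norm_nonneg _) two_ne_zero,
    norm_smul_add_smul_sq_of_inner_eq_zero hp (hv k) (hpv k), hst]

theorem isCenteredEquilateral_smul_add_smul (hp : ‖p‖ = 1) (hv : ∀ k, ‖v k‖ = 1)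
    (hpv : ∀ k, ⟪p, v k⟫ = 0) (hvv : ∀ j k, j ≠ k → ⟪v j, v k⟫ = -1 / 2) {s t : ℝ}
    (hst : s ^ 2 + t ^ 2 = 1) (ht : 0 ≤ t) :
    IsCenteredEquilateral p (fun k => s • p + t • v k) (√(2 - 2 * s)) (√3 * t) := by
  refine ⟨fun k => ?_, fun j k hjk => ?_⟩
  · rw [dist_eq_norm, ← Real.sqrt_sq (norm_nonneg _),
      show s • p + t • v k - p = (s - 1) • p + t • v k by module,
      norm_smul_add_smul_sq_of_inner_eq_zero hp (hv k) (hpv k)]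
    congr 1
    linear_combination hst
  · have hvjk : ‖v j - v k‖ ^ 2 = 3 := by
      rw [norm_sub_sq_real, hv, hv, hvv j k hjk]
      norm_num
    rw [dist_eq_norm, show s • p + t • v j - (s • p + t • v k) = t • (v j - v k) by module,
      norm_smul, Real.norm_of_nonneg ht, ← Real.sqrt_sq (norm_nonneg (v j - v k)), hvjk, mul_comm]

theorem exists_isCenteredEquilateral_sphere (hE : 3 ≤ finrank ℝ E) (p : sphere (0 : E) 1)
    {ε : ℝ} (hε : 0 < ε) : ∃ (y : Fin 3 → sphere (0 : E) 1) (R D : ℝ),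
      R < ε ∧ D ≠ 0 ∧ D ^ 2 ≠ 3 * R ^ 2 ∧ IsCenteredEquilateral p y R D := by
  have := Module.finite_of_finrank_pos (by omega : 0 < finrank ℝ E)
  have hp : ‖(p : E)‖ = 1 := norm_eq_of_mem_sphere p
  have hK : 2 ≤ finrank ℝ (ℝ ∙ (p : E))ᗮ := by
    have := Submodule.finrank_add_finrank_orthogonal (ℝ ∙ (p : E))
    rw [finrank_span_singleton (ne_zero_of_mem_unit_sphere p)] at this
    omega
  obtain ⟨w, hw, hww⟩ := exists_unit_vectors_inner_eq_neg_half hK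
  have hpw : ∀ k, ⟪(p : E), w k⟫ = 0 := fun k =>
    Submodule.inner_right_of_mem_orthogonal (Submodule.mem_span_singleton_self _) (w k).2
  set s := max 0 (1 - ε ^ 2 / 4)
  set t := √(1 - s ^ 2)
  have hs0 : 0 ≤ s := le_max_left _ _
  have hs1 : s < 1 := max_lt one_pos (by linarith [pow_pos hε 2])
  have hs2 : 0 < 1 - s ^ 2 := by nlinarith
  have hst : s ^ 2 + t ^ 2 = 1 := by rw [Real.sq_sqrt hs2.le]; ring
  have ht : 0 < t := Real.sqrt_pos.2 hs2
  refine ⟨fun k => ⟨s • (p : E) + t • (w k : E), by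
      simpa using norm_smul_add_smul_eq_one hp hw hpw hst k⟩, √(2 - 2 * s), √3 * t,
    ?_, by positivity, ?_, isCenteredEquilateral_smul_add_smul hp hw hpw hww hst ht.le⟩
  · rw [Real.sqrt_lt' hε]
    linarith [le_max_right 0 (1 - ε ^ 2 / 4), pow_pos hε 2]
  · rw [mul_pow, Real.sq_sqrt (show (0 : ℝ) ≤ 3 by norm_num),
      Real.sq_sqrt (show 0 ≤ 2 - 2 * s by linarith)]
    intro h
    nlinarith

end InnerProductSpace

/-- Euler's theorem: no geographical map preserves ratios of lengths.
There is no map from a nonempty open subset of the unit sphere `S² ⊆ ℝ³` into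
the Euclidean plane that scales all distances by a fixed ratio `c > 0`. -/
theorem no_scaled_isometry_sphere_to_plane
    (U : Set (Metric.sphere (0 : EuclideanSpace ℝ (Fin 3)) 1))
    (hU : IsOpen U) (hne : U.Nonempty)
    (f : U → EuclideanSpace ℝ (Fin 2)) (c : ℝ) (hc : 0 < c)
    (hf : ∀ x y : U, dist (f x) (f y) = c * dist x y) : False := by
  obtain ⟨p, hp⟩ := hne
  obtain ⟨ε, hε, hball⟩ := Metric.isOpen_iff.mp hU p hp
  obtain ⟨y, R, D, hRε, hD, hDR, hy⟩ := exists_isCenteredEquilateral_sphere (by simp) p hε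
  have hyU : ∀ k, y k ∈ U := fun k => hball (by rw [mem_ball, hy.1 k]; exact hRε)
  have hyU' : IsCenteredEquilateral (⟨p, hp⟩ : U) (fun k => ⟨y k, hyU k⟩) R D := hy
  have hplane := (hyU'.map_of_dist_eq_mul hf).sq_eq_three_mul_sq (by simp)
    (mul_ne_zero hc.ne' hD)
  exact hDR (mul_left_cancel₀ (pow_pos hc 2).ne' (by linear_combination hplane))
end

section
/- If a smooth surface carries a Chebyshev net with coordinate angle φ(u, v) and Gaussian curvature K(u, v), then φ satisfies the partial differential equation ∂²φ/∂u∂v + K sin φ = 0. -/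
open InnerProductGeometry
open scoped RealInnerProductSpace

private lemma parseval3 {a w nn : EuclideanSpace ℝ (Fin 3)}
    (h : Orthonormal ℝ ![a, w, nn]) (x y : EuclideanSpace ℝ (Fin 3)) :
    ⟪x, y⟫ = ⟪x, a⟫ * ⟪a, y⟫ + ⟪x, w⟫ * ⟪w, y⟫ + ⟪x, nn⟫ * ⟪nn, y⟫ := by
  have hsp : ⊤ ≤ Submodule.span ℝ (Set.range ![a, w, nn]) := by
    refine le_of_eq (Submodule.eq_top_of_finrank_eq ?_).symm
    rw [finrank_span_eq_card h.linearIndependent]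
    simp [finrank_euclideanSpace]
  let b : OrthonormalBasis (Fin 3) ℝ (EuclideanSpace ℝ (Fin 3)) := OrthonormalBasis.mk h hsp
  have hb := b.sum_inner_mul_inner x y
  rw [Fin.sum_univ_three] at hb
  have h0 : b 0 = a := by simp [b]
  have h1 : b 1 = w := by simp [b]
  have h2 : b 2 = nn := by simp [b]
  rw [h0, h1, h2] at hb
  exact hb.symm

private lemma unit_orth {f : ℝ × ℝ → EuclideanSpace ℝ (Fin 3)}
    (hf : Differentiable ℝ f) (h1 : ∀ q, ‖f q‖ = 1) (q v : ℝ × ℝ) :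
    ⟪f q, fderiv ℝ f q v⟫ = 0 := by
  have hconst : (fun q => ⟪f q, f q⟫) = fun _ => (1 : ℝ) := by
    funext q
    rw [real_inner_self_eq_norm_sq, h1 q]; norm_num
  have h0 : fderiv ℝ (fun q => ⟪f q, f q⟫) q v = 0 := by rw [hconst]; simp
  rw [fderiv_inner_apply ℝ (hf q) (hf q) v] at h0
  have hc := real_inner_comm (f q) (fderiv ℝ f q v)
  linarith

private lemma fderiv_fderiv_apply {f : ℝ × ℝ → EuclideanSpace ℝ (Fin 3)} {q : ℝ × ℝ}
    (hf : DifferentiableAt ℝ (fderiv ℝ f) q) (v w : ℝ × ℝ) :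
    fderiv ℝ (fun x => fderiv ℝ f x v) q w = fderiv ℝ (fderiv ℝ f) q w v := by
  rw [fderiv_clm_apply hf (differentiableAt_const v)]
  simp

/-- Chebyshev's equation: if a smooth surface `r : ℝ² → ℝ³` carries a Chebyshev
net (both coordinate vector fields have unit norm) with coordinate angle
`φ(u,v)` (assumed strictly between `0` and `π`), unit normal field `n`, and
Gaussian curvature `K = (L N − M²)/(E G − F²)` given by the second fundamental
form, then `∂²φ/∂u∂v + K sin φ = 0`. -/
theorem chebyshev_net_pde
    (r : ℝ × ℝ → EuclideanSpace ℝ (Fin 3)) (hr : ContDiff ℝ (⊤ : ℕ∞) r)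
    (ru rv : ℝ × ℝ → EuclideanSpace ℝ (Fin 3))
    (hru : ru = fun q => fderiv ℝ r q (1, 0))
    (hrv : rv = fun q => fderiv ℝ r q (0, 1))
    (hu : ∀ p, ‖ru p‖ = 1) (hv : ∀ p, ‖rv p‖ = 1)
    (φ : ℝ × ℝ → ℝ) (hφ : φ = fun q => angle (ru q) (rv q))
    (hreg : ∀ p, 0 < φ p ∧ φ p < Real.pi)
    (n : ℝ × ℝ → EuclideanSpace ℝ (Fin 3))
    (hn : ∀ p, ‖n p‖ = 1)
    (hnu : ∀ p, ⟪n p, ru p⟫ = 0) (hnv : ∀ p, ⟪n p, rv p⟫ = 0)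
    (K : ℝ × ℝ → ℝ)
    (hK : K = fun p =>
      (⟪fderiv ℝ ru p (1, 0), n p⟫ * ⟪fderiv ℝ rv p (0, 1), n p⟫ -
          ⟪fderiv ℝ ru p (0, 1), n p⟫ ^ 2) / (1 - ⟪ru p, rv p⟫ ^ 2)) :
    ∀ p, fderiv ℝ (fun q => fderiv ℝ φ q (1, 0)) p (0, 1) +
      K p * Real.sin (φ p) = 0 := by
  intro p
  -- smoothness of the coordinate fields
  have hr4 : ContDiff ℝ 4 r := hr.of_le (WithTop.coe_le_coe.2 le_top)
  have hdr : ContDiff ℝ 3 (fderiv ℝ r) := hr4.fderiv_right (by norm_num)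
  have hru3 : ContDiff ℝ 3 ru := by
    rw [hru]; exact hdr.clm_apply contDiff_const
  have hrv3 : ContDiff ℝ 3 rv := by
    rw [hrv]; exact hdr.clm_apply contDiff_const
  have hrud : Differentiable ℝ ru := hru3.differentiable (by norm_num)
  have hrvd : Differentiable ℝ rv := hrv3.differentiable (by norm_num)
  set e1 : ℝ × ℝ := (1, 0) with he1
  set e2 : ℝ × ℝ := (0, 1) with he2
  -- second-order coordinate fields
  set ruu : ℝ × ℝ → EuclideanSpace ℝ (Fin 3) := fun q => fderiv ℝ ru q e1 with hruu
  set ruv : ℝ × ℝ → EuclideanSpace ℝ (Fin 3) := fun q => fderiv ℝ ru q e2 with hruvdef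
  set rvv : ℝ × ℝ → EuclideanSpace ℝ (Fin 3) := fun q => fderiv ℝ rv q e2 with hrvvdef
  have hdru : ContDiff ℝ 2 (fderiv ℝ ru) := hru3.fderiv_right (by norm_num)
  have hdrv : ContDiff ℝ 2 (fderiv ℝ rv) := hrv3.fderiv_right (by norm_num)
  have hruu2 : ContDiff ℝ 2 ruu := hdru.clm_apply contDiff_const
  have hruv2 : ContDiff ℝ 2 ruv := hdru.clm_apply contDiff_const
  have hrvv2 : ContDiff ℝ 2 rvv := hdrv.clm_apply contDiff_const
  have hruud : Differentiable ℝ ruu := hruu2.differentiable (by norm_num)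
  have hruvd : Differentiable ℝ ruv := hruv2.differentiable (by norm_num)
  have hrvvd : Differentiable ℝ rvv := hrvv2.differentiable (by norm_num)
  -- symmetry of mixed second derivatives of r : ∂ᵤ rv = ∂ᵥ ru
  have hsymm : ∀ q, fderiv ℝ rv q e1 = ruv q := by
    intro q
    have hdq : DifferentiableAt ℝ (fderiv ℝ r) q := (hdr.differentiable (by norm_num)) q
    have hsnd := (hr4.contDiffAt (x := q)).isSymmSndFDerivAt (n := 4) (by norm_num) e1 e2
    calc fderiv ℝ rv q e1 = fderiv ℝ (fun x => fderiv ℝ r x e2) q e1 := by rw [hrv]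
      _ = fderiv ℝ (fderiv ℝ r) q e1 e2 := fderiv_fderiv_apply hdq e2 e1
      _ = fderiv ℝ (fderiv ℝ r) q e2 e1 := hsnd
      _ = fderiv ℝ (fun x => fderiv ℝ r x e1) q e2 := (fderiv_fderiv_apply hdq e1 e2).symm
      _ = fderiv ℝ ru q e2 := by rw [hru]
      _ = ruv q := rfl
  -- orthogonality from unit norms
  have hou : ∀ q v, ⟪ru q, fderiv ℝ ru q v⟫ = 0 := unit_orth hrud hu
  have hov : ∀ q v, ⟪rv q, fderiv ℝ rv q v⟫ = 0 := unit_orth hrvd hv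
  -- the metric coefficient F = cos φ
  set F : ℝ × ℝ → ℝ := fun q => ⟪ru q, rv q⟫ with hFdef
  have hF2 : ContDiff ℝ 2 F := (hru3.of_le (by norm_num)).inner ℝ (hrv3.of_le (by norm_num))
  have hFu : ∀ q, fderiv ℝ F q e1 = ⟪ruu q, rv q⟫ := by
    intro q
    rw [hFdef, fderiv_inner_apply ℝ (hrud q) (hrvd q) e1, hsymm q]
    have h0 : ⟪ru q, ruv q⟫ = (0:ℝ) := hou q e2
    rw [h0]
    simp only [zero_add]
    rfl
  have hzero2 : ∀ q, ⟪ruv q, rv q⟫ = 0 := by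
    intro q
    rw [← hsymm q, real_inner_comm]
    exact hov q e1
  have hFv : ∀ q, fderiv ℝ F q e2 = ⟪ru q, rvv q⟫ := by
    intro q
    rw [hFdef, fderiv_inner_apply ℝ (hrud q) (hrvd q) e2]
    have h0 : ⟪fderiv ℝ ru q e2, rv q⟫ = (0:ℝ) := hzero2 q
    rw [h0]
    simp only [add_zero]
    rfl
  -- φ = arccos ∘ F, basic facts
  have hφq : ∀ q, φ q = Real.arccos (F q) := by
    intro q
    rw [hφ]
    simp only [angle, hu q, hv q, mul_one, div_one]
    rfl
  have hFle : ∀ q, |F q| ≤ 1 := by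
    intro q
    have := abs_real_inner_le_norm (ru q) (rv q)
    rwa [hu q, hv q, mul_one] at this
  have hcos : ∀ q, Real.cos (φ q) = F q := by
    intro q
    have h := abs_le.1 (hFle q)
    rw [hφq q, Real.cos_arccos h.1 h.2]
  have hFne1 : ∀ q, F q ≠ 1 := by
    intro q h
    have h0 := (hreg q).1
    rw [hφq q, h, Real.arccos_one] at h0
    exact lt_irrefl 0 h0
  have hFne1' : ∀ q, F q ≠ -1 := by
    intro q h
    have h0 := (hreg q).2
    rw [hφq q, h, Real.arccos_neg_one] at h0
    exact lt_irrefl _ h0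
  have hφC : ∀ q, ContDiffAt ℝ 2 φ q := by
    intro q
    have hφeq : φ = fun x => Real.arccos (F x) := funext hφq
    rw [hφeq]
    exact (Real.contDiffAt_arccos (hFne1' q) (hFne1 q)).comp q hF2.contDiffAt
  have hφd : ∀ q, DifferentiableAt ℝ φ q := fun q => (hφC q).differentiableAt (by norm_num)
  set φu : ℝ × ℝ → ℝ := fun q => fderiv ℝ φ q e1 with hφudef
  -- first derivatives of F in terms of φ
  have hFder : ∀ q (v : ℝ × ℝ), fderiv ℝ F q v = -(Real.sin (φ q) * fderiv ℝ φ q v) := by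
    intro q v
    have hc : HasFDerivAt (fun x => Real.cos (φ x)) (-Real.sin (φ q) • fderiv ℝ φ q) q :=
      (hφd q).hasFDerivAt.cos
    have hFeq : F = fun x => Real.cos (φ x) := funext fun x => (hcos x).symm
    rw [hFeq, hc.fderiv]
    simp [mul_comm]
  have h1 : ∀ q, ⟪ruu q, rv q⟫ = -(Real.sin (φ q) * φu q) := by
    intro q
    rw [← hFu q, hFder q e1]
  -- differentiate h1 at p in the v-direction
  have hφuC : ContDiffAt ℝ 1 φu p := by
    exact ((hφC p).fderiv_right (m := 1) (by norm_num)).clm_apply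
      (contDiffAt_const (c := e1))
  have hφud : DifferentiableAt ℝ φu p := hφuC.differentiableAt (by norm_num)
  have hsin : HasFDerivAt (fun q => Real.sin (φ q)) (Real.cos (φ p) • fderiv ℝ φ p) p :=
    (hφd p).hasFDerivAt.sin
  have hmul := (hsin.mul hφud.hasFDerivAt).neg
  have hGeq : (fun q => ⟪ruu q, rv q⟫) = fun q => -(Real.sin (φ q) * φu q) := funext h1
  have hGder : fderiv ℝ (fun q => ⟪ruu q, rv q⟫) p e2 =
      -(Real.sin (φ p) * fderiv ℝ φu p e2 + φu p * (Real.cos (φ p) * fderiv ℝ φ p e2)) := by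
    rw [hGeq, show (fun q => -(Real.sin (φ q) * φu q)) = -((fun q => Real.sin (φ q)) * φu) from rfl, hmul.fderiv]
    simp [mul_comm]
  -- the left-hand side via the surface geometry
  have hGder2 : fderiv ℝ (fun q => ⟪ruu q, rv q⟫) p e2 =
      ⟪ruu p, rvv p⟫ + ⟪fderiv ℝ ruu p e2, rv p⟫ := by
    rw [fderiv_inner_apply ℝ (hruud p) (hrvd p) e2]
  -- third derivative symmetry : ∂ᵥ ruu = ∂ᵤ ruv
  have hthird : fderiv ℝ ruu p e2 = fderiv ℝ ruv p e1 := by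
    have hdq : DifferentiableAt ℝ (fderiv ℝ ru) p := (hdru.differentiable (by norm_num)) p
    have hsnd := (hru3.contDiffAt (x := p)).isSymmSndFDerivAt (n := 3) (by norm_num) e2 e1
    calc fderiv ℝ ruu p e2 = fderiv ℝ (fderiv ℝ ru) p e2 e1 := fderiv_fderiv_apply hdq e1 e2
      _ = fderiv ℝ (fderiv ℝ ru) p e1 e2 := hsnd
      _ = fderiv ℝ ruv p e1 := (fderiv_fderiv_apply hdq e2 e1).symm
  have h3 : ⟪fderiv ℝ ruv p e1, rv p⟫ = -⟪ruv p, ruv p⟫ := by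
    have hz : (fun q => ⟪ruv q, rv q⟫) = fun _ => (0:ℝ) := funext hzero2
    have h0 : fderiv ℝ (fun q => ⟪ruv q, rv q⟫) p e1 = 0 := by rw [hz]; simp
    rw [fderiv_inner_apply ℝ (hruvd p) (hrvd p) e1, hsymm p] at h0
    linarith
  -- master equation
  have master : ⟪ruu p, rvv p⟫ - ⟪ruv p, ruv p⟫ =
      -(Real.sin (φ p) * fderiv ℝ φu p e2 + φu p * (Real.cos (φ p) * fderiv ℝ φ p e2)) := by
    rw [← hGder, hGder2, hthird, h3]
    ring
  -- pointwise frame at p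
  set s : ℝ := Real.sin (φ p) with hsdef
  set c : ℝ := ⟪ru p, rv p⟫ with hcdef
  set φv : ℝ := fderiv ℝ φ p e2 with hφvdef
  set T : ℝ := fderiv ℝ φu p e2 with hTdef
  set L : ℝ := ⟪ruu p, n p⟫ with hLdef
  set M : ℝ := ⟪ruv p, n p⟫ with hMdef
  set N : ℝ := ⟪rvv p, n p⟫ with hNdef
  have hspos : 0 < s := Real.sin_pos_of_pos_of_lt_pi (hreg p).1 (hreg p).2
  have hsne : s ≠ 0 := ne_of_gt hspos
  have hcoseq : Real.cos (φ p) = c := hcos p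
  have hs2 : s ^ 2 = 1 - c ^ 2 := by rw [hsdef, Real.sin_sq, hcoseq]
  set w : EuclideanSpace ℝ (Fin 3) := s⁻¹ • (rv p - c • ru p) with hwdef
  have hxw : ∀ x, ⟪x, w⟫ = s⁻¹ * (⟪x, rv p⟫ - c * ⟪x, ru p⟫) := by
    intro x
    rw [hwdef, real_inner_smul_right, inner_sub_right, real_inner_smul_right]
  have hwx : ∀ x, ⟪w, x⟫ = s⁻¹ * (⟪rv p, x⟫ - c * ⟪ru p, x⟫) := by
    intro x
    rw [hwdef, real_inner_smul_left, inner_sub_left, real_inner_smul_left]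
  have haa : ⟪ru p, ru p⟫ = (1:ℝ) := by
    rw [real_inner_self_eq_norm_sq, hu p]; norm_num
  have hbb : ⟪rv p, rv p⟫ = (1:ℝ) := by
    rw [real_inner_self_eq_norm_sq, hv p]; norm_num
  have hnn : ⟪n p, n p⟫ = (1:ℝ) := by
    rw [real_inner_self_eq_norm_sq, hn p]; norm_num
  have hba : ⟪rv p, ru p⟫ = c := by rw [real_inner_comm, ← hcdef]
  have hanp : ⟪ru p, n p⟫ = (0:ℝ) := by rw [real_inner_comm]; exact hnu p
  have hbnp : ⟪rv p, n p⟫ = (0:ℝ) := by rw [real_inner_comm]; exact hnv p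
  have haw : ⟪ru p, w⟫ = (0:ℝ) := by rw [hxw, ← hcdef, haa]; ring
  have hwa : ⟪w, ru p⟫ = (0:ℝ) := by rw [real_inner_comm]; exact haw
  have hww : ⟪w, w⟫ = (1:ℝ) := by
    rw [hxw w, hwx (rv p), hwx (ru p), hbb, haa, hba, ← hcdef]
    have h1c : 1 - c * c = s ^ 2 := by rw [hs2]; ring
    field_simp
    linarith [h1c]
  have hwn : ⟪w, n p⟫ = (0:ℝ) := by rw [hwx, hanp, hbnp]; ring
  have hnw : ⟪n p, w⟫ = (0:ℝ) := by rw [real_inner_comm]; exact hwn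
  have hna : ⟪n p, ru p⟫ = (0:ℝ) := hnu p
  have hnb : ⟪n p, rv p⟫ = (0:ℝ) := hnv p
  have hON : Orthonormal ℝ ![ru p, w, n p] := by
    rw [orthonormal_iff_ite]
    intro i j
    fin_cases i <;> fin_cases j <;>
      simp only [Matrix.cons_val_zero, Matrix.cons_val_one, Matrix.head_cons, Fin.isValue,
        Matrix.cons_val_two, Matrix.tail_cons]
    · rw [if_pos (by decide)]; exact haa
    · rw [if_neg (by decide)]; exact haw
    · rw [if_neg (by decide)]; exact hanp
    · rw [if_neg (by decide)]; exact hwa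
    · rw [if_pos (by decide)]; exact hww
    · rw [if_neg (by decide)]; exact hwn
    · rw [if_neg (by decide)]; exact hna
    · rw [if_neg (by decide)]; exact hnw
    · rw [if_pos (by decide)]; exact hnn
  -- inner products of the second-derivative vectors with the frame
  have h_ruu_a : ⟪ruu p, ru p⟫ = (0:ℝ) := by
    rw [real_inner_comm]; exact hou p e1
  have h_ruu_b : ⟪ruu p, rv p⟫ = -(s * φu p) := by
    rw [h1 p, ← hsdef]
  have h_b_rvv : ⟪rv p, rvv p⟫ = (0:ℝ) := hov p e2
  have h_a_rvv : ⟪ru p, rvv p⟫ = -(s * φv) := by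
    rw [← hFv p, hFder p e2, ← hsdef, ← hφvdef]
  have h_a_ruv : ⟪ru p, ruv p⟫ = (0:ℝ) := hou p e2
  have h_ruv_a : ⟪ruv p, ru p⟫ = (0:ℝ) := by rw [real_inner_comm]; exact h_a_ruv
  have h_ruv_b : ⟪ruv p, rv p⟫ = (0:ℝ) := hzero2 p
  have h_b_ruv : ⟪rv p, ruv p⟫ = (0:ℝ) := by rw [real_inner_comm]; exact h_ruv_b
  have h_nn_rvv : ⟪n p, rvv p⟫ = N := by rw [real_inner_comm, ← hNdef]
  have h_nn_ruv : ⟪n p, ruv p⟫ = M := by rw [real_inner_comm, ← hMdef]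
  have h_a_rvv' : ⟪ru p, rvv p⟫ = -(s * φv) := h_a_rvv
  -- coordinates along w
  have e_ruu_w : ⟪ruu p, w⟫ = -φu p := by
    rw [hxw, h_ruu_b, h_ruu_a]
    field_simp
    ring
  have e_w_rvv : ⟪w, rvv p⟫ = c * φv := by
    rw [hwx, h_b_rvv, h_a_rvv]
    field_simp
    ring
  have e_ruv_w : ⟪ruv p, w⟫ = (0:ℝ) := by
    rw [hxw, h_ruv_b, h_ruv_a]; ring
  have e_w_ruv : ⟪w, ruv p⟫ = (0:ℝ) := by rw [real_inner_comm]; exact e_ruv_w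
  -- Parseval computations
  have hP1 : ⟪ruu p, rvv p⟫ = L * N - c * (φu p * φv) := by
    rw [parseval3 hON (ruu p) (rvv p), h_ruu_a, e_ruu_w, e_w_rvv, h_nn_rvv,
      hLdef.symm]
    ring
  have hP2 : ⟪ruv p, ruv p⟫ = M ^ 2 := by
    rw [parseval3 hON (ruv p) (ruv p), h_ruv_a, e_ruv_w, h_nn_ruv, ← hMdef]
    ring
  -- conclude
  have key : s * T = M ^ 2 - L * N := by
    have hm := master
    rw [hP1, hP2, hcoseq] at hm
    linear_combination hm
  have hKp : K p = (L * N - M ^ 2) / s ^ 2 := by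
    rw [hK]
    show (L * N - M ^ 2) / (1 - c ^ 2) = (L * N - M ^ 2) / s ^ 2
    rw [hs2]
  rw [hKp]
  field_simp
  linear_combination key
end

section
/- (Gauss–Lucas theorem) If p is a nonconstant polynomial with complex coefficients, then every root of the derivative p' lies in the convex hull of the set of roots of p. -/
open Polynomial

/-- Gauss–Lucas theorem: every root of the derivative of a nonconstant complex
polynomial lies in the convex hull of the set of roots of the polynomial. -/
theorem gauss_lucas (p : Polynomial ℂ) (hp : 0 < p.degree)
    (z : ℂ) (hz : p.derivative.IsRoot z) :
    z ∈ convexHull ℝ (↑p.roots.toFinset : Set ℂ) := by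
  rw [eq_centerMass_of_eval_derivative_eq_zero hp hz]
  exact Finset.centerMass_mem_convexHull _ (fun w _ ↦ derivRootWeight_nonneg p z w)
    (sum_derivRootWeight_pos hp z) fun _ ↦ id
end
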